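/- Let G be a Fuchsian group of convergence type, i.e., ∑_{g∈G}(1 − |g(0)|) < ∞, acting on the unit disk Δ with all orbit points g(0) distinct and hyperbolically separated (ρ(g(0), h(0)) ≥ δ > 0 for g ≠ h). Then the measure ∑_{g∈G}(1 − |g(0)|²) δ_{g(0)} is a Carleson measure on Δ; equivalently (by Carleson's interpolation theorem), the orbit {g(0)}_{g∈G} is an interpolating sequence for H^∞(Δ). -/

import Mathlib

open Metric Complex

/-- The pseudo-hyperbolic distance between two points of the unit disk. -/
noncomputable def pseudoDist (a b : ℂ) : ℝ :=
  ‖(a - b) / (1 - (starRingEnd ℂ) a * b)‖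

/-- The hyperbolic (Poincaré) distance on the unit disk. -/
noncomputable def hypDist (a b : ℂ) : ℝ :=
  Real.log ((1 + pseudoDist a b) / (1 - pseudoDist a b))

lemma normSq_one_sub_conj_mul (a b : ℂ) :
    ‖1 - (starRingEnd ℂ) a * b‖^2 = ‖a - b‖^2 + (1 - ‖a‖^2)*(1 - ‖b‖^2) := by
  simp only [Complex.sq_norm]
  simp [Complex.normSq_apply, Complex.sub_re, Complex.sub_im, Complex.mul_re, Complex.mul_im]
  ring

lemma denom_pos {a b : ℂ} (ha : ‖a‖ < 1) (hb : ‖b‖ < 1) :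
    0 < ‖1 - (starRingEnd ℂ) a * b‖ := by
  have h1 : ‖(starRingEnd ℂ) a * b‖ < 1 := by
    rw [norm_mul, RCLike.norm_conj]
    nlinarith [norm_nonneg a, norm_nonneg b]
  have := norm_sub_norm_le (1 : ℂ) ((starRingEnd ℂ) a * b)
  simp only [norm_one] at this
  linarith

lemma one_sub_pd_sq {a b : ℂ} (ha : ‖a‖ < 1) (hb : ‖b‖ < 1) :
    1 - pseudoDist a b ^ 2 = (1 - ‖a‖^2)*(1 - ‖b‖^2) / ‖1 - (starRingEnd ℂ) a * b‖^2 := by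
  have hd := denom_pos ha hb
  have hd2 : (0:ℝ) < ‖1 - (starRingEnd ℂ) a * b‖^2 := by positivity
  rw [pseudoDist, norm_div, div_pow]
  rw [eq_div_iff (ne_of_gt hd2), sub_mul, div_mul_cancel₀ _ (ne_of_gt hd2), one_mul,
    normSq_one_sub_conj_mul]
  ring

lemma pd_nonneg (a b : ℂ) : 0 ≤ pseudoDist a b := norm_nonneg _

lemma pd_lt_one {a b : ℂ} (ha : ‖a‖ < 1) (hb : ‖b‖ < 1) : pseudoDist a b < 1 := by
  have h := one_sub_pd_sq ha hb
  have hd2 : (0:ℝ) < ‖1 - (starRingEnd ℂ) a * b‖^2 := pow_pos (denom_pos ha hb) 2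
  have hpos : 0 < 1 - pseudoDist a b ^ 2 := by
    rw [h]
    apply div_pos ?_ hd2
    have h1 : (0:ℝ) < 1 - ‖a‖^2 := by nlinarith [norm_nonneg a]
    have h2 : (0:ℝ) < 1 - ‖b‖^2 := by nlinarith [norm_nonneg b]
    positivity
  nlinarith [pd_nonneg a b]

lemma pd_eq_of_hyp_eq {p q : ℝ} (hp0 : 0 ≤ p) (hp1 : p < 1) (hq0 : 0 ≤ q) (hq1 : q < 1)
    (h : Real.log ((1+p)/(1-p)) = Real.log ((1+q)/(1-q))) : p = q := by
  have key : ∀ x y : ℝ, 0 ≤ x → x < 1 → 0 ≤ y → y < 1 → x < y →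
      Real.log ((1+x)/(1-x)) < Real.log ((1+y)/(1-y)) := by
    intro x y hx0 hx1 hy0 hy1 hxy
    apply Real.log_lt_log (by apply div_pos <;> linarith)
    rw [div_lt_div_iff₀ (by linarith) (by linarith)]
    nlinarith
  rcases lt_trichotomy p q with hlt | he | hgt
  · exact absurd h (ne_of_lt (key p q hp0 hp1 hq0 hq1 hlt))
  · exact he
  · exact absurd h.symm (ne_of_lt (key q p hq0 hq1 hp0 hp1 hgt))

lemma pd_zero_left (b : ℂ) : pseudoDist 0 b = ‖b‖ := by
  simp [pseudoDist]


lemma norm_exp_sub_sq (t τ R : ℝ) :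
    ‖Complex.exp (t*I) - (R:ℂ) * Complex.exp (τ*I)‖^2 = 1 + R^2 - 2*R*Real.cos (t - τ) := by
  simp only [Complex.sq_norm]
  simp [Complex.normSq_apply, Complex.exp_mul_I, Complex.sub_re, Complex.sub_im,
    Complex.add_re, Complex.add_im, Complex.mul_re, Complex.mul_im, Complex.cos_ofReal_re,
    Complex.sin_ofReal_re, Complex.cos_ofReal_im, Complex.sin_ofReal_im, Real.cos_sub]
  nlinarith [Real.sin_sq_add_cos_sq t, Real.sin_sq_add_cos_sq τ]

section pt
variable {ξ w : ℂ} {r : ℝ}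

lemma zeta_formula (hξ : ‖ξ‖ = 1) (t : ℝ) :
    ‖ξ * Complex.exp (t*I) - w‖^2
      = 1 + ‖w‖^2 - 2*‖w‖*Real.cos (t - Complex.arg ((starRingEnd ℂ) ξ * w)) := by
  set u := (starRingEnd ℂ) ξ * w with hu
  have hξu : ξ * u = w := by
    rw [hu, ← mul_assoc, Complex.mul_conj]
    have : Complex.normSq ξ = 1 := by
      have := Complex.sq_norm ξ
      rw [← this, hξ]; norm_num
    rw [this]; simp
  have hnu : ‖u‖ = ‖w‖ := by rw [hu, norm_mul, RCLike.norm_conj, hξ, one_mul]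
  have key : ξ * Complex.exp (t*I) - w = ξ * (Complex.exp (t*I) - u) := by
    rw [mul_sub, hξu]
  rw [key, norm_mul, hξ, one_mul]
  have hrep : u = (‖u‖ : ℂ) * Complex.exp ((Complex.arg u : ℂ) * I) := by
    exact (Complex.norm_mul_exp_arg_mul_I u).symm
  calc ‖Complex.exp (t*I) - u‖^2
      = ‖Complex.exp (t*I) - (‖u‖:ℂ) * Complex.exp ((Complex.arg u : ℂ) * I)‖^2 := by rw [← hrep]
    _ = 1 + ‖u‖^2 - 2*‖u‖*Real.cos (t - Complex.arg u) := by
        have := norm_exp_sub_sq t (Complex.arg u) ‖u‖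
        simpa using this
    _ = 1 + ‖w‖^2 - 2*‖w‖*Real.cos (t - Complex.arg u) := by rw [hnu]

lemma zeta_norm_lower (hξ : ‖ξ‖ = 1) (hw1 : ‖w‖ < 1) (t : ℝ) :
    1 - ‖w‖ ≤ ‖ξ * Complex.exp (t*I) - w‖ := by
  have h1 : ‖ξ * Complex.exp (t*I)‖ = 1 := by
    rw [norm_mul, hξ, one_mul]
    simpa using Complex.norm_exp_ofReal_mul_I t
  have := norm_sub_norm_le (ξ * Complex.exp (t*I)) w
  rw [h1] at this; linarith

lemma tau_bound (hξ : ‖ξ‖ = 1) (hr4 : r ≤ 1/4) (hwb : ‖w - ξ‖ < r)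
    (hR : 3/4 ≤ ‖w‖) : |Complex.arg ((starRingEnd ℂ) ξ * w)| ≤ 2*r := by
  set u := (starRingEnd ℂ) ξ * w with hu
  set τ := Complex.arg u with hτ
  have hr0 : 0 < r := lt_of_le_of_lt (norm_nonneg _) hwb
  have hnu : ‖u‖ = ‖w‖ := by rw [hu, norm_mul, RCLike.norm_conj, hξ, one_mul]
  have hu1 : ‖(1:ℂ) - u‖ < r := by
    have : (1:ℂ) - u = (starRingEnd ℂ) ξ * (ξ - w) := by
      rw [hu, mul_sub]
      congr 1
      rw [mul_comm, Complex.mul_conj]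
      have : Complex.normSq ξ = 1 := by
        have := Complex.sq_norm ξ
        rw [← this, hξ]; norm_num
      rw [this]; norm_num
    rw [this, norm_mul, RCLike.norm_conj, hξ, one_mul, ← norm_neg]
    simpa using hwb
  -- ‖1 - u‖^2 = 1 + R^2 - 2 R cos τ
  have hsq : ‖(1:ℂ) - u‖^2 = 1 + ‖w‖^2 - 2*‖w‖*Real.cos τ := by
    have hrep : u = (‖u‖ : ℂ) * Complex.exp ((τ : ℝ) * I) := by
      rw [hτ]
      exact (Complex.norm_mul_exp_arg_mul_I u).symm
    calc ‖(1:ℂ) - u‖^2 = ‖Complex.exp ((0:ℝ)*I) - (‖u‖:ℂ) * Complex.exp ((τ:ℝ) * I)‖^2 := by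
          rw [← hrep]; norm_num
      _ = 1 + ‖u‖^2 - 2*‖u‖*Real.cos (0 - τ) := by
          have := norm_exp_sub_sq 0 τ ‖u‖
          simpa using this
      _ = 1 + ‖w‖^2 - 2*‖w‖*Real.cos τ := by rw [hnu, zero_sub, Real.cos_neg]
  have hτπ : |τ| ≤ Real.pi := Complex.abs_arg_le_pi u
  have hcos : Real.cos τ ≤ 1 - 2/Real.pi^2 * τ^2 := Real.cos_le_one_sub_mul_cos_sq hτπ
  have hπ : Real.pi^2 ≤ 12 := by nlinarith [Real.pi_lt_d2, Real.pi_gt_three]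
  have hπ0 : 0 < Real.pi ^ 2 := by positivity
  have h6 : (1:ℝ)/6 ≤ 2/Real.pi^2 := by
    rw [div_le_div_iff₀ (by norm_num) hπ0]; nlinarith
  have hcos' : 1 - Real.cos τ ≥ τ^2/6 := by nlinarith [sq_nonneg τ]
  have h1 : 2*‖w‖*(1 - Real.cos τ) ≥ τ^2/4 := by nlinarith [sq_nonneg τ]
  have expand : ‖(1:ℂ) - u‖^2 = (1 - ‖w‖)^2 + 2*‖w‖*(1 - Real.cos τ) := by
    rw [hsq]; ring
  have h3 : τ^2 ≤ 4*r^2 := by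
    have hn : ‖(1:ℂ) - u‖^2 < r^2 := by
      nlinarith [norm_nonneg ((1:ℂ) - u)]
    nlinarith [sq_nonneg (1 - ‖w‖)]
  have h4 : |τ|^2 ≤ (2*r)^2 := by rw [_root_.sq_abs]; nlinarith
  nlinarith [abs_nonneg τ, h4]

end pt

lemma cont_inv_quad (τ η : ℝ) (hη : 0 < η) :
    Continuous (fun t : ℝ => 1/(η^2 + (t-τ)^2/4)) := by
  apply Continuous.div continuous_const
  · fun_prop
  · intro t; positivity

lemma integral_arctan_bound (τ η A : ℝ) (hη : 0 < η) :
    ∫ t in (-A)..A, 1/(η^2 + (t-τ)^2/4) ≤ 2*Real.pi/η := by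
  set F : ℝ → ℝ := fun t => (2/η) * Real.arctan ((t-τ)/(2*η)) with hF
  have hderiv : ∀ t ∈ Set.uIcc (-A) A, HasDerivAt F (1/(η^2 + (t-τ)^2/4)) t := by
    intro t _
    have h1 : HasDerivAt (fun t : ℝ => (t-τ)/(2*η)) (1/(2*η)) t := by
      simpa using ((hasDerivAt_id t).sub_const τ).div_const (2*η)
    have h2 := (Real.hasDerivAt_arctan ((t-τ)/(2*η))).comp t h1
    have h3 := h2.const_mul (2/η)
    refine h3.congr_deriv ?_
    field_simp
    ring
  have hint : IntervalIntegrable (fun t : ℝ => 1/(η^2 + (t-τ)^2/4)) MeasureTheory.volume (-A) A :=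
    (cont_inv_quad τ η hη).intervalIntegrable _ _
  rw [intervalIntegral.integral_eq_sub_of_hasDerivAt hderiv hint]
  have b1 : Real.arctan ((A-τ)/(2*η)) < Real.pi/2 := Real.arctan_lt_pi_div_two _
  have b2 : -(Real.pi/2) < Real.arctan ((-A-τ)/(2*η)) := Real.neg_pi_div_two_lt_arctan _
  have h2η : 0 < 2/η := by positivity
  have : F A - F (-A) ≤ (2/η) * Real.pi := by
    simp only [hF]
    rw [← mul_sub]
    have : Real.arctan ((A-τ)/(2*η)) - Real.arctan ((-A-τ)/(2*η)) ≤ Real.pi := by linarith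
    nlinarith
  linarith [this, (by rw [div_mul_eq_mul_div, mul_comm] : (2/η) * Real.pi = 2*Real.pi/η)]

section pt2
variable {ξ w : ℂ} {r : ℝ}

lemma cont_term (hw1 : ‖w‖ < 1) (hξ : ‖ξ‖ = 1) (c : ℝ) :
    Continuous (fun t : ℝ => c/‖ξ * Complex.exp (t*I) - w‖^2) := by
  apply Continuous.div continuous_const
  · fun_prop
  · intro t
    have := zeta_norm_lower hξ hw1 t
    have : 0 < ‖ξ * Complex.exp (t*I) - w‖ := by linarith
    positivity

lemma L2 (hξ : ‖ξ‖ = 1) (hr : 0 < r) (hr4 : r ≤ 1/4) (hw1 : ‖w‖ < 1) (hwb : ‖w - ξ‖ < r) :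
    ∫ t in (-(4*r))..(4*r), 1/‖ξ * Complex.exp (t*I) - w‖^2 ≤ 13/(1 - ‖w‖^2) := by
  set τ := Complex.arg ((starRingEnd ℂ) ξ * w) with hτ
  set η := 1 - ‖w‖ with hη
  have hη0 : 0 < η := by rw [hη]; linarith
  have hR : 3/4 ≤ ‖w‖ := by
    have : ‖ξ‖ - ‖w‖ ≤ ‖ξ - w‖ := norm_sub_norm_le ξ w
    rw [← norm_neg (ξ - w)] at this
    simp only [neg_sub] at this
    rw [hξ] at this; linarith
  have hτ2 : |τ| ≤ 2*r := tau_bound hξ hr4 hwb hR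
  have hmono : ∀ t ∈ Set.Icc (-(4*r)) (4*r),
      1/‖ξ * Complex.exp (t*I) - w‖^2 ≤ 1/(η^2 + (t-τ)^2/4) := by
    intro t ht
    obtain ⟨ht1, ht2⟩ := ht
    have htτ : |t - τ| ≤ 6*r := by
      rw [abs_le] at hτ2 ⊢
      constructor <;> linarith [hτ2.1, hτ2.2]
    have htτπ : |t - τ| ≤ Real.pi := by
      have : (6:ℝ)*r ≤ 3/2 := by linarith
      linarith [Real.pi_gt_three, htτ]
    have hcos : Real.cos (t - τ) ≤ 1 - 2/Real.pi^2 * (t-τ)^2 :=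
      Real.cos_le_one_sub_mul_cos_sq htτπ
    have hπ : Real.pi^2 ≤ 12 := by nlinarith [Real.pi_lt_d2, Real.pi_gt_three]
    have hπ0 : 0 < Real.pi ^ 2 := by positivity
    have h6 : (1:ℝ)/6 ≤ 2/Real.pi^2 := by
      rw [div_le_div_iff₀ (by norm_num) hπ0]; nlinarith
    have hcos' : 1 - Real.cos (t - τ) ≥ (t-τ)^2/6 := by nlinarith [sq_nonneg (t-τ)]
    have hlow : η^2 + (t-τ)^2/4 ≤ ‖ξ * Complex.exp (t*I) - w‖^2 := by
      rw [zeta_formula hξ t, ← hτ]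
      have expand : 1 + ‖w‖^2 - 2*‖w‖*Real.cos (t - τ)
          = (1 - ‖w‖)^2 + 2*‖w‖*(1 - Real.cos (t - τ)) := by ring
      rw [expand, hη]
      nlinarith [sq_nonneg (t-τ)]
    apply one_div_le_one_div_of_le
    · positivity
    · exact hlow
  have hint1 : IntervalIntegrable (fun t : ℝ => 1/‖ξ * Complex.exp (t*I) - w‖^2)
      MeasureTheory.volume (-(4*r)) (4*r) := (cont_term hw1 hξ 1).intervalIntegrable _ _
  have hint2 : IntervalIntegrable (fun t : ℝ => 1/(η^2 + (t-τ)^2/4))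
      MeasureTheory.volume (-(4*r)) (4*r) := (cont_inv_quad τ η hη0).intervalIntegrable _ _
  have step1 := intervalIntegral.integral_mono_on (by linarith : -(4*r) ≤ 4*r) hint1 hint2 hmono
  have step2 := integral_arctan_bound τ η (4*r) hη0
  have step3 : 2*Real.pi/η ≤ 13/(1 - ‖w‖^2) := by
    have hh : 1 - ‖w‖^2 = η * (1 + ‖w‖) := by rw [hη]; ring
    have hh2 : 1 - ‖w‖^2 ≤ 2*η := by rw [hh]; nlinarith
    have hh0 : 0 < 1 - ‖w‖^2 := by nlinarith [norm_nonneg w]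
    rw [div_le_div_iff₀ hη0 hh0]
    nlinarith [Real.pi_lt_d2]
  linarith

lemma L1 (hξ : ‖ξ‖ = 1) (hr : 0 < r) (hr4 : r ≤ 1/4) (hw1 : ‖w‖ < 1) (hwb : ‖w - ξ‖ < r) :
    (1 - ‖w‖^2)/2 ≤ ∫ t in (-(4*r))..(4*r), (1 - ‖w‖^2)^2/‖ξ * Complex.exp (t*I) - w‖^2 := by
  set τ := Complex.arg ((starRingEnd ℂ) ξ * w) with hτ
  set η := 1 - ‖w‖ with hη
  set h := 1 - ‖w‖^2 with hh
  have hη0 : 0 < η := by rw [hη]; linarith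
  have hR : 3/4 ≤ ‖w‖ := by
    have : ‖ξ‖ - ‖w‖ ≤ ‖ξ - w‖ := norm_sub_norm_le ξ w
    rw [← norm_neg (ξ - w)] at this
    simp only [neg_sub] at this
    rw [hξ] at this; linarith
  have hηr : η < r := by
    have : ‖ξ‖ - ‖w‖ ≤ ‖ξ - w‖ := norm_sub_norm_le ξ w
    rw [← norm_neg (ξ - w)] at this
    simp only [neg_sub] at this
    rw [hξ] at this; rw [hη]; linarith
  have hh0 : 0 < h := by rw [hh]; nlinarith [norm_nonneg w]
  have hhη : η ≤ h := by rw [hh, hη]; nlinarith [norm_nonneg w]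
  have hh2η : h ≤ 2*η := by rw [hh, hη]; nlinarith
  have hτ2 : |τ| ≤ 2*r := tau_bound hξ hr4 hwb hR
  -- pointwise upper bound for the distance on the small interval
  have hup : ∀ t ∈ Set.Icc (τ - η) (τ + η), ‖ξ * Complex.exp (t*I) - w‖ ≤ 2*η := by
    intro t ht
    obtain ⟨ht1, ht2⟩ := ht
    have habs : |t - τ| ≤ η := by rw [abs_le]; constructor <;> linarith
    set u := (starRingEnd ℂ) ξ * w with hu
    have hξu : ξ * u = w := by
      rw [hu, ← mul_assoc, Complex.mul_conj]
      have : Complex.normSq ξ = 1 := by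
        have := Complex.sq_norm ξ
        rw [← this, hξ]; norm_num
      rw [this]; simp
    have hnu : ‖u‖ = ‖w‖ := by rw [hu, norm_mul, RCLike.norm_conj, hξ, one_mul]
    have key : ξ * Complex.exp (t*I) - w = ξ * (Complex.exp (t*I) - u) := by
      rw [mul_sub, hξu]
    rw [key, norm_mul, hξ, one_mul]
    have hrep : u = (‖u‖ : ℂ) * Complex.exp ((τ : ℝ) * I) := by
      rw [hτ, hu]
      exact (Complex.norm_mul_exp_arg_mul_I _).symm
    have tri : ‖Complex.exp (t*I) - u‖ ≤
        ‖Complex.exp (t*I) - Complex.exp ((τ:ℝ)*I)‖ + ‖Complex.exp ((τ:ℝ)*I) - u‖ :=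
      norm_sub_le_norm_sub_add_norm_sub _ _ _
    have t1 : ‖Complex.exp (t*I) - Complex.exp ((τ:ℝ)*I)‖ ≤ |t - τ| := by
      have hsq : ‖Complex.exp (t*I) - Complex.exp ((τ:ℝ)*I)‖^2 = 2 - 2*Real.cos (t - τ) := by
        have := norm_exp_sub_sq t τ 1
        norm_num at this
        rw [this]
      have hcos : 1 - (t-τ)^2/2 ≤ Real.cos (t - τ) := Real.one_sub_sq_div_two_le_cos
      have h1 : ‖Complex.exp (t*I) - Complex.exp ((τ:ℝ)*I)‖^2 ≤ (t-τ)^2 := by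
        rw [hsq]; linarith
      nlinarith [norm_nonneg (Complex.exp (t*I) - Complex.exp ((τ:ℝ)*I)), abs_nonneg (t-τ),
        _root_.sq_abs (t-τ)]
    have t2 : ‖Complex.exp ((τ:ℝ)*I) - u‖ = η := by
      rw [hrep, hnu]
      have : Complex.exp ((τ:ℝ)*I) - (‖w‖:ℂ) * Complex.exp ((τ:ℝ)*I)
          = ((1 - ‖w‖ : ℝ) : ℂ) * Complex.exp ((τ:ℝ)*I) := by push_cast; ring
      rw [this, norm_mul]
      have he : ‖Complex.exp ((τ:ℝ)*I)‖ = 1 := by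
        simpa using Complex.norm_exp_ofReal_mul_I τ
      rw [he, mul_one, Complex.norm_real, Real.norm_eq_abs, abs_of_pos hη0]
    calc ‖Complex.exp (t*I) - u‖ ≤ |t - τ| + η := by rw [← t2]; exact le_trans tri (by linarith)
      _ ≤ 2*η := by linarith
  -- now the integral chain
  have hsub1 : -(4*r) ≤ τ - η := by
    rw [abs_le] at hτ2; linarith [hτ2.1]
  have hsub2 : τ + η ≤ 4*r := by
    rw [abs_le] at hτ2; linarith [hτ2.2]
  have hab : τ - η ≤ τ + η := by linarith
  have hint_big : IntervalIntegrable (fun t : ℝ => h^2/‖ξ * Complex.exp (t*I) - w‖^2)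
      MeasureTheory.volume (-(4*r)) (4*r) := (cont_term hw1 hξ _).intervalIntegrable _ _
  have hint_small : IntervalIntegrable (fun t : ℝ => h^2/‖ξ * Complex.exp (t*I) - w‖^2)
      MeasureTheory.volume (τ - η) (τ + η) := (cont_term hw1 hξ _).intervalIntegrable _ _
  have hconst : ∀ t ∈ Set.Icc (τ - η) (τ + η),
      h^2/(4*η^2) ≤ h^2/‖ξ * Complex.exp (t*I) - w‖^2 := by
    intro t ht
    have h1 := hup t ht
    have h2 := zeta_norm_lower hξ hw1 t
    have h3 : 0 < ‖ξ * Complex.exp (t*I) - w‖ := by rw [hη] at hη0; linarith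
    apply div_le_div_of_nonneg_left (by positivity) (by positivity)
    nlinarith
  have step0 : h^2/(4*η^2) * (2*η) ≤ ∫ t in (τ-η)..(τ+η), h^2/‖ξ * Complex.exp (t*I) - w‖^2 := by
    have := intervalIntegral.integral_mono_on hab
      (intervalIntegrable_const) hint_small hconst
    rw [intervalIntegral.integral_const] at this
    have heq : (τ + η - (τ - η)) • (h^2/(4*η^2)) = h^2/(4*η^2) * (2*η) := by
      rw [smul_eq_mul]; ring
    linarith [heq ▸ this]
  have step1 : ∫ t in (τ-η)..(τ+η), h^2/‖ξ * Complex.exp (t*I) - w‖^2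
      ≤ ∫ t in (-(4*r))..(4*r), h^2/‖ξ * Complex.exp (t*I) - w‖^2 := by
    apply intervalIntegral.integral_mono_interval hsub1 hab hsub2
    · filter_upwards with t
      have h2 := zeta_norm_lower hξ hw1 t
      have h3 : 0 < ‖ξ * Complex.exp (t*I) - w‖ := by rw [hη] at hη0; linarith
      positivity
    · exact hint_big
  have final : h/2 ≤ h^2/(4*η^2) * (2*η) := by
    rw [div_mul_eq_mul_div, div_le_div_iff₀ (by norm_num) (by positivity)]
    nlinarith [mul_le_mul_of_nonneg_left hhη (by positivity : (0:ℝ) ≤ 4*h*η)]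
  linarith

end pt2

lemma D_le_sum {ζ w w' : ℂ} (hζ : ‖ζ‖ = 1) (hw : ‖w‖ ≤ 1) :
    ‖1 - (starRingEnd ℂ) w * w'‖ ≤ ‖ζ - w‖ + ‖ζ - w'‖ := by
  have hid : 1 - (starRingEnd ℂ) w * w'
      = (1 - (starRingEnd ℂ) w * ζ) + (starRingEnd ℂ) w * (ζ - w') := by ring
  have h1 : ‖1 - (starRingEnd ℂ) w * ζ‖ = ‖ζ - w‖ := by
    rw [← RCLike.norm_conj (1 - (starRingEnd ℂ) w * ζ)]
    have : (starRingEnd ℂ) (1 - (starRingEnd ℂ) w * ζ) = (starRingEnd ℂ) ζ * (ζ - w) := by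
      have hζ2 : (starRingEnd ℂ) ζ * ζ = 1 := by
        rw [mul_comm, Complex.mul_conj]
        have : Complex.normSq ζ = 1 := by
          have := Complex.sq_norm ζ
          rw [← this, hζ]; norm_num
        rw [this]; norm_num
      rw [map_sub, map_mul, map_one, RingHomCompTriple.comp_apply, RingHom.id_apply]
      rw [mul_sub, hζ2]
      ring
    rw [this, norm_mul, RCLike.norm_conj, hζ, one_mul]
  calc ‖1 - (starRingEnd ℂ) w * w'‖
      ≤ ‖1 - (starRingEnd ℂ) w * ζ‖ + ‖(starRingEnd ℂ) w * (ζ - w')‖ := by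
        rw [hid]; exact norm_add_le _ _
    _ ≤ ‖ζ - w‖ + ‖ζ - w'‖ := by
        rw [h1, norm_mul, RCLike.norm_conj]
        have : ‖w‖ * ‖ζ - w'‖ ≤ 1 * ‖ζ - w'‖ :=
          mul_le_mul_of_nonneg_right hw (norm_nonneg _)
        linarith

lemma D_symm (a b : ℂ) :
    ‖1 - (starRingEnd ℂ) a * b‖ = ‖1 - (starRingEnd ℂ) b * a‖ := by
  rw [← RCLike.norm_conj (1 - (starRingEnd ℂ) a * b)]
  congr 1
  rw [map_sub, map_mul, map_one, RingHomCompTriple.comp_apply, RingHom.id_apply]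
  ring

lemma denom_pos' {a b : ℂ} (ha : ‖a‖ < 1) (hb : ‖b‖ < 1) :
    0 < ‖1 - (starRingEnd ℂ) a * b‖ := by
  have h1 : ‖(starRingEnd ℂ) a * b‖ < 1 := by
    rw [norm_mul, RCLike.norm_conj]
    nlinarith [norm_nonneg a, norm_nonneg b]
  have := norm_sub_norm_le (1 : ℂ) ((starRingEnd ℂ) a * b)
  simp only [norm_one] at this
  linarith

set_option maxHeartbeats 2000000 in
lemma core {ι : Type*} (s : Finset ι) (z : ι → ℂ) (ξ : ℂ) (hξ : ‖ξ‖ = 1)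
    (r M : ℝ) (hr : 0 < r) (hr4 : r ≤ 1/4) (hM : 0 < M)
    (hz1 : ∀ j ∈ s, ‖z j‖ < 1)
    (hzb : ∀ j ∈ s, ‖z j - ξ‖ < r)
    (hrow : ∀ i ∈ s, ∑ j ∈ s,
      (1 - ‖z i‖^2)*(1 - ‖z j‖^2)/‖1 - (starRingEnd ℂ) (z i) * (z j)‖^2 ≤ M) :
    ∑ j ∈ s, (1 - ‖z j‖^2) ≤ 1664 * M * r := by
  classical
  set h : ι → ℝ := fun j => 1 - ‖z j‖^2 with hh
  set S := ∑ j ∈ s, h j with hS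
  have hpos : ∀ j ∈ s, 0 < h j := by
    intro j hj
    have := hz1 j hj
    simp only [hh]
    nlinarith [norm_nonneg (z j)]
  have hS0 : 0 ≤ S := Finset.sum_nonneg fun j hj => (hpos j hj).le
  set trm : ι → ℝ → ℝ := fun j t => (h j)^2/‖ξ * Complex.exp (t*I) - z j‖^2 with htrm
  have hzpos : ∀ j ∈ s, ∀ t : ℝ, 0 < ‖ξ * Complex.exp (t*I) - z j‖ := by
    intro j hj t
    have := zeta_norm_lower hξ (hz1 j hj) t
    linarith [hz1 j hj]
  have htrm_nonneg : ∀ j ∈ s, ∀ t : ℝ, 0 ≤ trm j t := by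
    intro j hj t
    have := hzpos j hj t
    positivity
  have hcont : ∀ j ∈ s, Continuous (trm j) := fun j hj => cont_term (hz1 j hj) hξ _
  have hint : ∀ j ∈ s, IntervalIntegrable (trm j) MeasureTheory.volume (-(4*r)) (4*r) :=
    fun j hj => (hcont j hj).intervalIntegrable _ _
  set F : ℝ → ℝ := fun t => ∑ j ∈ s, trm j t with hF
  have hFcont : Continuous F := by
    apply continuous_finset_sum
    intro j hj; exact hcont j hj
  have hFint : IntervalIntegrable F MeasureTheory.volume (-(4*r)) (4*r) :=
    hFcont.intervalIntegrable _ _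
  have hF2int : IntervalIntegrable (fun t => (F t)^2) MeasureTheory.volume (-(4*r)) (4*r) :=
    (hFcont.pow 2).intervalIntegrable _ _
  -- Lower bound : S/2 ≤ ∫ F
  have hlow : S/2 ≤ ∫ t in (-(4*r))..(4*r), F t := by
    have hsum : ∫ t in (-(4*r))..(4*r), F t = ∑ j ∈ s, ∫ t in (-(4*r))..(4*r), trm j t :=
      intervalIntegral.integral_finset_sum (fun j hj => hint j hj)
    rw [hsum, hS, Finset.sum_div]
    apply Finset.sum_le_sum
    intro j hj
    exact L1 hξ hr hr4 (hz1 j hj) (hzb j hj)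
  -- Upper bound on pair integrals
  have hpair : ∀ i ∈ s, ∀ j ∈ s,
      (∫ t in (-(4*r))..(4*r), trm i t * trm j t)
        ≤ 26 * ((h i * h j / ‖1 - (starRingEnd ℂ) (z i) * (z j)‖^2) * (h i + h j)) := by
    intro i hi j hj
    set D := ‖1 - (starRingEnd ℂ) (z i) * (z j)‖ with hD
    have hD0 : 0 < D := denom_pos' (hz1 i hi) (hz1 j hj)
    set G : ℝ → ℝ := fun t => 2*(h i)^2*(h j)^2/D^2 * (1/‖ξ * Complex.exp (t*I) - z i‖^2)
      + 2*(h i)^2*(h j)^2/D^2 * (1/‖ξ * Complex.exp (t*I) - z j‖^2) with hG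
    have hptwise : ∀ t ∈ Set.Icc (-(4*r)) (4*r), trm i t * trm j t ≤ G t := by
      intro t _
      set a := ‖ξ * Complex.exp (t*I) - z i‖ with ha
      set b := ‖ξ * Complex.exp (t*I) - z j‖ with hb
      have ha0 : 0 < a := hzpos i hi t
      have hb0 : 0 < b := hzpos j hj t
      have hζ1 : ‖ξ * Complex.exp (t*I)‖ = 1 := by
        rw [norm_mul, hξ, one_mul]
        simpa using Complex.norm_exp_ofReal_mul_I t
      have hDle : D ≤ a + b := by
        rw [hD, ha, hb]
        have : ‖ξ * Complex.exp (t*I) - z i‖ = ‖(ξ * Complex.exp (t*I)) - z i‖ := rfl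
        exact D_le_sum hζ1 (hz1 i hi).le
      have hkey : (1:ℝ)/(a^2*b^2) ≤ 2*(a^2+b^2)/(D^2*(a^2*b^2)) := by
        rw [div_le_div_iff₀ (by positivity) (by positivity)]
        have h1 : D^2 ≤ 2*(a^2+b^2) := by nlinarith [sq_nonneg (a-b), hDle, hD0.le, ha0.le, hb0.le]
        nlinarith [mul_le_mul_of_nonneg_right h1 (by positivity : (0:ℝ) ≤ a^2*b^2)]
      have hGe : G t = 2*(h i)^2*(h j)^2/D^2 * (1/a^2 + 1/b^2) := by
        rw [hG]; ring
      have htt : trm i t * trm j t = (h i)^2*(h j)^2 * (1/(a^2*b^2)) := by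
        simp only [htrm, ← ha, ← hb]
        field_simp
      rw [htt, hGe]
      have hhij : (0:ℝ) ≤ (h i)^2*(h j)^2 := by positivity
      have e2 : 2*(a^2+b^2)/(D^2*(a^2*b^2)) = 2/D^2 * (1/a^2 + 1/b^2) := by
        field_simp
        ring
      calc (h i)^2*(h j)^2 * (1/(a^2*b^2))
          ≤ (h i)^2*(h j)^2 * (2*(a^2+b^2)/(D^2*(a^2*b^2))) :=
            mul_le_mul_of_nonneg_left hkey hhij
        _ = 2*(h i)^2*(h j)^2/D^2 * (1/a^2 + 1/b^2) := by rw [e2]; ring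
    have hGint : IntervalIntegrable G MeasureTheory.volume (-(4*r)) (4*r) := by
      apply IntervalIntegrable.add
      · exact (continuous_const.mul (cont_term (hz1 i hi) hξ 1)).intervalIntegrable _ _
      · exact (continuous_const.mul (cont_term (hz1 j hj) hξ 1)).intervalIntegrable _ _
    have hprodint : IntervalIntegrable (fun t => trm i t * trm j t)
        MeasureTheory.volume (-(4*r)) (4*r) :=
      ((hcont i hi).mul (hcont j hj)).intervalIntegrable _ _
    have step1 := intervalIntegral.integral_mono_on (by linarith : -(4*r) ≤ 4*r)
      hprodint hGint hptwise
    have hGval : (∫ t in (-(4*r))..(4*r), G t)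
        = 2*(h i)^2*(h j)^2/D^2 * (∫ t in (-(4*r))..(4*r), 1/‖ξ * Complex.exp (t*I) - z i‖^2)
        + 2*(h i)^2*(h j)^2/D^2 * (∫ t in (-(4*r))..(4*r), 1/‖ξ * Complex.exp (t*I) - z j‖^2) := by
      rw [hG]
      rw [intervalIntegral.integral_add
        (((cont_term (hz1 i hi) hξ 1).intervalIntegrable _ _).const_mul _)
        (((cont_term (hz1 j hj) hξ 1).intervalIntegrable _ _).const_mul _),
        intervalIntegral.integral_const_mul, intervalIntegral.integral_const_mul]
    have hL2i := L2 hξ hr hr4 (hz1 i hi) (hzb i hi)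
    have hL2j := L2 hξ hr hr4 (hz1 j hj) (hzb j hj)
    have hc : (0:ℝ) ≤ 2*(h i)^2*(h j)^2/D^2 := by positivity
    have hfin : 2*(h i)^2*(h j)^2/D^2 * (13/(h i)) + 2*(h i)^2*(h j)^2/D^2 * (13/(h j))
        = 26 * ((h i * h j / D^2) * (h i + h j)) := by
      field_simp [(hpos i hi).ne', (hpos j hj).ne']
      ring
    calc (∫ t in (-(4*r))..(4*r), trm i t * trm j t) ≤ ∫ t in (-(4*r))..(4*r), G t := step1
      _ ≤ 2*(h i)^2*(h j)^2/D^2 * (13/(h i)) + 2*(h i)^2*(h j)^2/D^2 * (13/(h j)) := by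
          rw [hGval]
          have b1 := mul_le_mul_of_nonneg_left hL2i hc
          have b2 := mul_le_mul_of_nonneg_left hL2j hc
          simp only [hh] at b1 b2 ⊢
          linarith
      _ = 26 * ((h i * h j / D^2) * (h i + h j)) := hfin
  -- Upper bound : ∫ F^2 ≤ 52 M S
  have hupper : (∫ t in (-(4*r))..(4*r), (F t)^2) ≤ 52 * M * S := by
    have hsq : ∀ t : ℝ, (F t)^2 = ∑ i ∈ s, ∑ j ∈ s, trm i t * trm j t := by
      intro t
      rw [hF, sq]
      rw [Finset.sum_mul_sum]
    have hint2 : ∀ i ∈ s, IntervalIntegrable (fun t => ∑ j ∈ s, trm i t * trm j t)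
        MeasureTheory.volume (-(4*r)) (4*r) := by
      intro i hi
      apply Continuous.intervalIntegrable
      apply continuous_finset_sum
      intro j hj
      exact (hcont i hi).mul (hcont j hj)
    have e1 : (∫ t in (-(4*r))..(4*r), (F t)^2)
        = ∑ i ∈ s, ∑ j ∈ s, ∫ t in (-(4*r))..(4*r), trm i t * trm j t := by
      rw [intervalIntegral.integral_congr (fun t _ => hsq t)]
      rw [intervalIntegral.integral_finset_sum hint2]
      apply Finset.sum_congr rfl
      intro i hi
      exact intervalIntegral.integral_finset_sum
          (fun j hj => ((hcont i hi).mul (hcont j hj)).intervalIntegrable _ _)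
    rw [e1]
    set E : ι → ι → ℝ := fun i j => h i * h j / ‖1 - (starRingEnd ℂ) (z i) * z j‖^2 with hE
    have hEsymm : ∀ i j, E i j = E j i := by
      intro i j
      simp only [hE]
      rw [D_symm (z i) (z j), mul_comm (h i) (h j)]
    have hrowE : ∀ i ∈ s, ∑ j ∈ s, E i j ≤ M := by
      intro i hi
      have := hrow i hi
      simpa [hE, hh] using this
    have bound1 : ∑ i ∈ s, ∑ j ∈ s, (∫ t in (-(4*r))..(4*r), trm i t * trm j t)
        ≤ ∑ i ∈ s, ∑ j ∈ s, 26 * (E i j * (h i + h j)) := by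
      apply Finset.sum_le_sum
      intro i hi
      apply Finset.sum_le_sum
      intro j hj
      exact hpair i hi j hj
    have split : ∑ i ∈ s, ∑ j ∈ s, 26 * (E i j * (h i + h j))
        = 26 * (∑ i ∈ s, ∑ j ∈ s, E i j * h i) + 26 * (∑ i ∈ s, ∑ j ∈ s, E i j * h j) := by
      simp_rw [Finset.mul_sum]
      rw [← Finset.sum_add_distrib]
      apply Finset.sum_congr rfl
      intro i _
      rw [← Finset.sum_add_distrib]
      apply Finset.sum_congr rfl
      intro j _
      ring
    have boundA : ∑ i ∈ s, ∑ j ∈ s, E i j * h i ≤ M * S := by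
      rw [hS, Finset.mul_sum]
      apply Finset.sum_le_sum
      intro i hi
      rw [← Finset.sum_mul]
      calc (∑ j ∈ s, E i j) * h i ≤ M * h i :=
            mul_le_mul_of_nonneg_right (hrowE i hi) (hpos i hi).le
        _ = M * h i := rfl
    have boundB : ∑ i ∈ s, ∑ j ∈ s, E i j * h j ≤ M * S := by
      rw [Finset.sum_comm]
      rw [hS, Finset.mul_sum]
      apply Finset.sum_le_sum
      intro j hj
      rw [← Finset.sum_mul]
      have : ∑ i ∈ s, E i j = ∑ i ∈ s, E j i := Finset.sum_congr rfl fun i _ => hEsymm i j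
      calc (∑ i ∈ s, E i j) * h j = (∑ i ∈ s, E j i) * h j := by rw [this]
        _ ≤ M * h j := mul_le_mul_of_nonneg_right (hrowE j hj) (hpos j hj).le
    calc ∑ i ∈ s, ∑ j ∈ s, (∫ t in (-(4*r))..(4*r), trm i t * trm j t)
        ≤ ∑ i ∈ s, ∑ j ∈ s, 26 * (E i j * (h i + h j)) := bound1
      _ = 26 * (∑ i ∈ s, ∑ j ∈ s, E i j * h i) + 26 * (∑ i ∈ s, ∑ j ∈ s, E i j * h j) := split
      _ ≤ 26 * (M*S) + 26 * (M*S) := by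
          have b1 := boundA; have b2 := boundB
          nlinarith
      _ = 52 * M * S := by ring
  -- AM-GM step
  set d : ℝ := 104*M with hd
  have hd0 : 0 < d := by rw [hd]; linarith
  have hptw : ∀ t ∈ Set.Icc (-(4*r)) (4*r), 2 * F t - (1/d) * (F t)^2 ≤ d := by
    intro t _
    have h1 : (2*F t - d)*d ≤ (F t)^2 := by nlinarith [sq_nonneg (F t - d)]
    have h2 : 2*F t - d ≤ (F t)^2/d := (le_div_iff₀ hd0).mpr h1
    have h3 : (F t)^2/d = (1/d) * (F t)^2 := by ring
    linarith [h3 ▸ h2]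
  have hgint : IntervalIntegrable (fun t => 2 * F t - (1/d) * (F t)^2)
      MeasureTheory.volume (-(4*r)) (4*r) := by
    apply IntervalIntegrable.sub
    · exact (continuous_const.mul hFcont).intervalIntegrable _ _
    · exact (continuous_const.mul (hFcont.pow 2)).intervalIntegrable _ _
  have hgmono := intervalIntegral.integral_mono_on (by linarith : -(4*r) ≤ 4*r)
    hgint (intervalIntegrable_const) hptw
  rw [intervalIntegral.integral_const, smul_eq_mul] at hgmono
  have hgval : (∫ t in (-(4*r))..(4*r), (2 * F t - (1/d) * (F t)^2))
      = 2 * (∫ t in (-(4*r))..(4*r), F t) - (1/d) * (∫ t in (-(4*r))..(4*r), (F t)^2) := by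
    rw [intervalIntegral.integral_sub
      ((hFcont.intervalIntegrable _ _).const_mul _)
      (hF2int.const_mul _),
      intervalIntegral.integral_const_mul, intervalIntegral.integral_const_mul]
  rw [hgval] at hgmono
  -- combine
  have hcomb : 2 * (S/2) ≤ (4*r - -(4*r)) * d + (1/d) * (52*M*S) := by
    have t1 : (1/d) * (∫ t in (-(4*r))..(4*r), (F t)^2) ≤ (1/d) * (52*M*S) :=
      mul_le_mul_of_nonneg_left hupper (by positivity)
    have t2 : 2 * (S/2) ≤ 2 * (∫ t in (-(4*r))..(4*r), F t) := by linarith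
    linarith
  have hfin : (1/d) * (52*M*S) = S/2 := by
    rw [hd]
    field_simp
    ring
  rw [hfin] at hcomb
  have : (4*r - -(4*r)) * d = 832 * M * r := by rw [hd]; ring
  rw [this] at hcomb
  linarith

/-- Let `G` be a Fuchsian group of convergence type
(`∑_{g∈G} (1-|g(0)|) < ∞`), acting on the unit disk with all orbit points of `0`
distinct and hyperbolically separated.  Then `∑_{g∈G} (1-|g(0)|²) δ_{g(0)}` is a
Carleson measure on the disk, and the orbit of `0` is an interpolating sequence
(uniformly bounded-below Blaschke products). -/
theorem stmt_7 {G : Type*} [Group G] (φ : G → ℂ → ℂ)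
    (hone : φ 1 = id)
    (hmul : ∀ g h : G, ∀ z : ℂ, φ (g * h) z = φ g (φ h z))
    (hmaps : ∀ g : G, Set.MapsTo (φ g) (ball (0:ℂ) 1) (ball (0:ℂ) 1))
    (hiso : ∀ g : G, ∀ a ∈ ball (0:ℂ) 1, ∀ b ∈ ball (0:ℂ) 1,
      hypDist (φ g a) (φ g b) = hypDist a b)
    (hinj : Function.Injective (fun g : G => φ g 0))
    (hsep : ∃ δ > 0, ∀ g h : G, g ≠ h → δ ≤ hypDist (φ g 0) (φ h 0))
    (hconv : Summable fun g : G => 1 - ‖φ g 0‖) :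
    (∃ C : ℝ, ∀ ξ ∈ sphere (0:ℂ) 1, ∀ r : ℝ, 0 < r →
        (∑' g : {g : G // φ g 0 ∈ ball ξ r}, (1 - ‖φ (g : G) 0‖ ^ 2)) ≤ C * r) ∧
    (∃ δ' > 0, ∀ g : G,
        δ' ≤ ∏' h : {h : G // h ≠ g}, pseudoDist (φ g 0) (φ (h : G) 0)) := by
  classical
  have h0ball : (0:ℂ) ∈ ball (0:ℂ) 1 := by simp
  have horb : ∀ g : G, φ g 0 ∈ ball (0:ℂ) 1 := fun g => hmaps g h0ball
  have hnorm1 : ∀ g : G, ‖φ g 0‖ < 1 := fun g => mem_ball_zero_iff.mp (horb g)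
  have hφ1 : φ (1:G) 0 = 0 := by rw [hone]; rfl
  -- pseudoDist invariance
  have hpd_inv : ∀ g : G, ∀ a ∈ ball (0:ℂ) 1, ∀ b ∈ ball (0:ℂ) 1,
      pseudoDist (φ g a) (φ g b) = pseudoDist a b := by
    intro g a ha b hb
    have h1 := hiso g a ha b hb
    simp only [hypDist] at h1
    exact pd_eq_of_hyp_eq (pd_nonneg _ _)
      (pd_lt_one (mem_ball_zero_iff.mp (hmaps g ha)) (mem_ball_zero_iff.mp (hmaps g hb)))
      (pd_nonneg _ _) (pd_lt_one (mem_ball_zero_iff.mp ha) (mem_ball_zero_iff.mp hb)) h1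
  have hpd_orbit : ∀ g k : G, pseudoDist (φ g 0) (φ k 0) = ‖φ (g⁻¹*k) 0‖ := by
    intro g k
    have e1 : φ k 0 = φ g (φ (g⁻¹*k) 0) := by
      rw [← hmul]
      congr 1
      group
    calc pseudoDist (φ g 0) (φ k 0) = pseudoDist (φ g 0) (φ g (φ (g⁻¹*k) 0)) := by rw [← e1]
      _ = pseudoDist 0 (φ (g⁻¹*k) 0) := hpd_inv g 0 h0ball _ (horb _)
      _ = ‖φ (g⁻¹*k) 0‖ := pd_zero_left _
  -- summability of 1 - ‖φ k 0‖^2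
  have hterm_nonneg : ∀ k : G, 0 ≤ 1 - ‖φ k 0‖^2 := by
    intro k; nlinarith [hnorm1 k, norm_nonneg (φ k 0)]
  have hsum2 : Summable (fun k : G => 1 - ‖φ k 0‖^2) := by
    apply Summable.of_nonneg_of_le hterm_nonneg ?_ (hconv.mul_left 2)
    intro k
    nlinarith [hnorm1 k, norm_nonneg (φ k 0)]
  set M := ∑' k : G, (1 - ‖φ k 0‖^2) with hM
  have hM1 : 1 ≤ M := by
    have := Summable.le_tsum hsum2 1 (fun k _ => hterm_nonneg k)
    rw [hφ1] at this
    simpa using this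
  constructor
  · -- Carleson part
    refine ⟨1664 * M, ?_⟩
    intro ξ hξ r hr
    have hξ1 : ‖ξ‖ = 1 := by
      have := mem_sphere_iff_norm.mp hξ
      simpa using this
    have hsub : Summable (fun g : {g : G // φ g 0 ∈ ball ξ r} => 1 - ‖φ (g:G) 0‖^2) :=
      hsum2.subtype _
    by_cases hr4 : r ≤ 1/4
    · apply Summable.tsum_le_of_sum_le hsub
      intro s
      apply core s (fun j => φ (j:G) 0) ξ hξ1 r M hr hr4 (by linarith)
      · intro j _; exact hnorm1 _
      · intro j _
        have := j.2
        rw [mem_ball, Complex.dist_eq] at this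
        exact this
      · -- row bound
        intro i _
        have hterm : ∀ j : {g : G // φ g 0 ∈ ball ξ r},
            (1 - ‖φ (i:G) 0‖^2)*(1 - ‖φ (j:G) 0‖^2)
              /‖1 - (starRingEnd ℂ) (φ (i:G) 0) * (φ (j:G) 0)‖^2
            = 1 - ‖φ ((i:G)⁻¹*(j:G)) 0‖^2 := by
          intro j
          rw [← one_sub_pd_sq (hnorm1 _) (hnorm1 _), hpd_orbit]
        calc ∑ j ∈ s, (1 - ‖φ (i:G) 0‖^2)*(1 - ‖φ (j:G) 0‖^2)
              /‖1 - (starRingEnd ℂ) (φ (i:G) 0) * (φ (j:G) 0)‖^2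
            = ∑ j ∈ s, (1 - ‖φ ((i:G)⁻¹*(j:G)) 0‖^2) :=
              Finset.sum_congr rfl (fun j _ => hterm j)
          _ = ∑ k ∈ s.image (fun j : {g : G // φ g 0 ∈ ball ξ r} => (i:G)⁻¹*(j:G)),
                (1 - ‖φ k 0‖^2) := by
              rw [Finset.sum_image]
              intro a _ b _ hab
              have : (a : G) = (b : G) := by
                have := mul_left_cancel hab
                exact this
              exact Subtype.ext this
          _ ≤ M := Summable.sum_le_tsum _ (fun k _ => hterm_nonneg k) hsum2
    · -- r > 1/4 : use total mass
      push_neg at hr4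
      have htot : (∑' g : {g : G // φ g 0 ∈ ball ξ r}, (1 - ‖φ (g:G) 0‖^2)) ≤ M := by
        apply Summable.tsum_le_tsum_of_inj (fun g : {g : G // φ g 0 ∈ ball ξ r} => (g : G))
          Subtype.val_injective (fun k _ => hterm_nonneg k) (fun j => le_refl _) hsub hsum2
      nlinarith
  · -- interpolating part
    set f : G → ℝ := fun k => ‖φ k 0‖ with hf
    have hfpos : ∀ k : G, k ≠ 1 → 0 < f k := by
      intro k hk
      have : φ k 0 ≠ 0 := by
        intro hcon
        apply hk
        apply hinj (a₁ := k) (a₂ := 1)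
        show φ k 0 = φ 1 0
        rw [hφ1, hcon]
      simpa [hf] using norm_pos_iff.mpr this
    have hsumsub : Summable (fun k : {k : G // k ≠ 1} => 1 - f (k:G)) := hconv.subtype _
    have hlogsum : Summable (fun k : {k : G // k ≠ 1} => Real.log (f (k:G))) := by
      apply Summable.of_norm_bounded_eventually (g := fun k : {k : G // k ≠ 1} => 2*(1 - f (k:G))) (hsumsub.mul_left 2)
      have hev : ∀ᶠ k : {k : G // k ≠ 1} in Filter.cofinite, 1 - f (k:G) < 1/2 := by
        have ht := hsumsub.tendsto_cofinite_zero
        exact ht.eventually (eventually_lt_nhds (by norm_num : (0:ℝ) < 1/2)) |>.mono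
          (fun k hk => hk)
      filter_upwards [hev] with k hk
      have h1 : 1/2 < f (k:G) := by linarith
      have h2 : f (k:G) < 1 := hnorm1 _
      have h3 : 0 < f (k:G) := by linarith
      have hlog : Real.log (f (k:G)) ≤ 0 := Real.log_nonpos h3.le h2.le
      rw [Real.norm_eq_abs, abs_of_nonpos hlog]
      have h4 : -Real.log (f (k:G)) = Real.log (f (k:G))⁻¹ := (Real.log_inv _).symm
      rw [h4]
      have h5 : Real.log (f (k:G))⁻¹ ≤ (f (k:G))⁻¹ - 1 :=
        Real.log_le_sub_one_of_pos (by positivity)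
      have h6 : (f (k:G))⁻¹ - 1 ≤ 2*(1 - f (k:G)) := by
        rw [inv_eq_one_div, div_sub' h3.ne']
        rw [div_le_iff₀ h3]
        nlinarith
      linarith
    set L := ∑' k : {k : G // k ≠ 1}, Real.log (f (k:G)) with hL
    have hprod : HasProd (fun k : {k : G // k ≠ 1} => f (k:G)) (Real.exp L) := by
      have h1 : HasSum (fun k : {k : G // k ≠ 1} => Real.log (f (k:G))) L := hlogsum.hasSum
      have h2 := h1.rexp
      have h3 : (Real.exp ∘ fun k : {k : G // k ≠ 1} => Real.log (f (k:G)))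
          = fun k : {k : G // k ≠ 1} => f (k:G) := by
        funext k
        exact Real.exp_log (hfpos _ k.2)
      rwa [h3] at h2
    refine ⟨Real.exp L, Real.exp_pos L, ?_⟩
    intro g
    let e : {k : G // k ≠ 1} ≃ {h : G // h ≠ g} :=
      { toFun := fun k => ⟨g * (k:G), by
          intro hcon
          apply k.2
          have : g * (k:G) = g * 1 := by rw [hcon, mul_one]
          exact mul_left_cancel this⟩
        invFun := fun h => ⟨g⁻¹ * (h:G), by
          intro hcon
          apply h.2
          have : g⁻¹ * (h:G) = g⁻¹ * g := by rw [hcon]; group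
          exact mul_left_cancel this⟩
        left_inv := fun k => by
          apply Subtype.ext
          simp
        right_inv := fun h => by
          apply Subtype.ext
          simp }
    have key : (∏' h : {h : G // h ≠ g}, pseudoDist (φ g 0) (φ (h:G) 0)) = Real.exp L := by
      rw [← Equiv.tprod_eq e (fun h : {h : G // h ≠ g} => pseudoDist (φ g 0) (φ (h:G) 0))]
      have hcongr : ∀ k : {k : G // k ≠ 1},
          pseudoDist (φ g 0) (φ ((e k : {h : G // h ≠ g}):G) 0) = f (k:G) := by
        intro k
        have he : ((e k : {h : G // h ≠ g}):G) = g * (k:G) := rfl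
        rw [he, hpd_orbit g (g * (k:G))]
        congr 1
        group
      rw [tprod_congr hcongr]
      exact hprod.tprod_eq
    rw [key]
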